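/- arXiv:1612.00921 — 3 statements merged into one kernel-verified Lean document; each statement's English description precedes it below -/
import Mathlib

section
/- Let η ∈ 𝒟(ℝ) with a ≤ η'(x) ≤ b for all x (0 < a < b), and let ξ = η⁻¹ be its inverse. Then ∫_ℝ |ξ'(x) − 1|² dx ≤ (1/a) ∫_ℝ |η'(y) − 1|² dy; in particular the left-hand integral is finite. -/
open Filter MeasureTheory

/-- `η` belongs to the diffeomorphism group `𝒟(ℝ)` with derivative bounds `a ≤ η' ≤ b`. -/
def InD (η : ℝ → ℝ) (a b : ℝ) : Prop :=
  ContDiff ℝ 1 η ∧ (∀ x : ℝ, a ≤ deriv η x ∧ deriv η x ≤ b) ∧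
  Integrable (fun x : ℝ => (η x - x) ^ 2) ∧
  Integrable (fun x : ℝ => (deriv η x - 1) ^ 2) ∧
  Tendsto (deriv η) (cocompact ℝ) (nhds 1)

/- Substituting `x = η y` and using `ξ' (η y) = 1 / η' y` gives
`∫ (ξ' x - 1)² dx = ∫ (1 / η' y - 1)² η' y dy = ∫ (η' y - 1)² / η' y dy`,
and `η' ≥ a` bounds the last integrand by `(η' y - 1)² / a`. -/

theorem StrictMono.continuous_of_inverse {α β : Type*} [LinearOrder α] [TopologicalSpace α]
    [OrderTopology α] [DenselyOrdered α] [LinearOrder β] [TopologicalSpace β] [OrderTopology β]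
    {η : α → β} {ξ : β → α} (hη : StrictMono η) (hl : Function.LeftInverse ξ η)
    (hr : Function.RightInverse ξ η) : Continuous ξ := by
  have hξ : Monotone ξ := fun x y hxy => hη.le_iff_le.mp (by rwa [hr x, hr y])
  exact hξ.continuous_of_surjective hl.surjective

theorem StrictMono.hasDerivAt_inverse {η ξ : ℝ → ℝ} {η' x : ℝ} (hη : StrictMono η)
    (hl : Function.LeftInverse ξ η) (hr : Function.RightInverse ξ η)
    (hd : HasDerivAt η η' (ξ x)) (h0 : η' ≠ 0) : HasDerivAt ξ η'⁻¹ x :=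
  hd.of_local_left_inverse (hη.continuous_of_inverse hl hr).continuousAt h0
    (Eventually.of_forall hr)

section ChangeOfVariables

variable {F : Type*} [NormedAddCommGroup F] [NormedSpace ℝ F] {η : ℝ → ℝ}

theorem integrable_iff_integrable_abs_deriv_smul_comp (hd : Differentiable ℝ η)
    (hη : Function.Bijective η) (g : ℝ → F) :
    Integrable g ↔ Integrable (fun y => |deriv η y| • g (η y)) := by
  simpa [hη.surjective.range_eq] using integrableOn_image_iff_integrableOn_abs_deriv_smul
    MeasurableSet.univ (fun y _ => (hd y).hasDerivAt.hasDerivWithinAt) hη.injective.injOn g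

theorem integral_eq_integral_abs_deriv_smul_comp (hd : Differentiable ℝ η)
    (hη : Function.Bijective η) (g : ℝ → F) :
    ∫ x, g x = ∫ y, |deriv η y| • g (η y) := by
  simpa [hη.surjective.range_eq] using integral_image_eq_integral_abs_deriv_smul
    MeasurableSet.univ (fun y _ => (hd y).hasDerivAt.hasDerivWithinAt) hη.injective.injOn g

end ChangeOfVariables

theorem sq_sub_one_div_le {a t : ℝ} (ha : 0 < a) (ht : a ≤ t) :
    (t - 1) ^ 2 / t ≤ 1 / a * (t - 1) ^ 2 := by
  rw [one_div_mul_eq_div]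
  exact div_le_div_of_nonneg_left (sq_nonneg _) ha ht

section WeightedSquare

variable {α : Type*} [MeasurableSpace α] {μ : Measure α} {f : α → ℝ} {a : ℝ}

theorem integrable_sq_sub_one_div (ha : 0 < a) (hf : ∀ y, a ≤ f y)
    (hfm : AEStronglyMeasurable f μ) (hint : Integrable (fun y => (f y - 1) ^ 2) μ) :
    Integrable (fun y => (f y - 1) ^ 2 / f y) μ := by
  refine (hint.const_mul (1 / a)).mono'
    (hint.aemeasurable.div hfm.aemeasurable).aestronglyMeasurable ?_
  filter_upwards with y
  have hy : 0 < f y := ha.trans_le (hf y)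
  rw [Real.norm_of_nonneg (by positivity)]
  exact sq_sub_one_div_le ha (hf y)

theorem integral_sq_sub_one_div_le (ha : 0 < a) (hf : ∀ y, a ≤ f y)
    (hfm : AEStronglyMeasurable f μ) (hint : Integrable (fun y => (f y - 1) ^ 2) μ) :
    ∫ y, (f y - 1) ^ 2 / f y ∂μ ≤ 1 / a * ∫ y, (f y - 1) ^ 2 ∂μ := by
  rw [← integral_const_mul]
  exact integral_mono (integrable_sq_sub_one_div ha hf hfm hint) (hint.const_mul _)
    fun y => sq_sub_one_div_le ha (hf y)

end WeightedSquare

theorem inverse_deriv_L2_bound_general (η ξ : ℝ → ℝ) (a b : ℝ) (ha : 0 < a)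
    (hη : InD η a b)
    (hl : Function.LeftInverse ξ η) (hr : Function.RightInverse ξ η) :
    Integrable (fun x : ℝ => (deriv ξ x - 1) ^ 2) ∧
    ∫ x : ℝ, (deriv ξ x - 1) ^ 2 ≤ (1 / a) * ∫ y : ℝ, (deriv η y - 1) ^ 2 := by
  obtain ⟨hC1, hbound, -, hint, -⟩ := hη
  have hd : Differentiable ℝ η := hC1.differentiable one_ne_zero
  have hlow : ∀ y, a ≤ deriv η y := fun y => (hbound y).1
  have hpos : ∀ y, 0 < deriv η y := fun y => ha.trans_le (hlow y)
  have hmono : StrictMono η := strictMono_of_deriv_pos hpos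
  have hderiv (y : ℝ) : deriv ξ (η y) = (deriv η y)⁻¹ :=
    (hmono.hasDerivAt_inverse hl hr (by rw [hl y]; exact (hd y).hasDerivAt) (hpos y).ne').deriv
  have hsubst : (fun y => |deriv η y| • (deriv ξ (η y) - 1) ^ 2) =
      fun y => (deriv η y - 1) ^ 2 / deriv η y := by
    funext y
    have hne : deriv η y ≠ 0 := (hpos y).ne'
    rw [hderiv, abs_of_pos (hpos y), smul_eq_mul]
    field_simp
    ring
  have hbij : Function.Bijective η := ⟨hl.injective, hr.surjective⟩
  have hmeas : AEStronglyMeasurable (deriv η) volume := (measurable_deriv η).aestronglyMeasurable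
  rw [integrable_iff_integrable_abs_deriv_smul_comp hd hbij,
    integral_eq_integral_abs_deriv_smul_comp hd hbij, hsubst]
  exact ⟨integrable_sq_sub_one_div ha hlow hmeas hint,
    integral_sq_sub_one_div_le ha hlow hmeas hint⟩

/-- For `η ∈ 𝒟(ℝ)` with inverse `ξ`, `∫ |ξ'(x) − 1|² dx ≤ (1/a) ∫ |η'(y) − 1|² dy`;
in particular the left-hand integral is finite. -/
theorem inverse_deriv_L2_bound (η ξ : ℝ → ℝ) (a b : ℝ) (ha : 0 < a) (hab : a < b)
    (hη : InD η a b)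
    (hl : Function.LeftInverse ξ η) (hr : Function.RightInverse ξ η) :
    Integrable (fun x : ℝ => (deriv ξ x - 1) ^ 2) ∧
    ∫ x : ℝ, (deriv ξ x - 1) ^ 2 ≤ (1 / a) * ∫ y : ℝ, (deriv η y - 1) ^ 2 :=
  inverse_deriv_L2_bound_general η ξ a b ha hη hl hr
end

section
/- The composition map Comp¹ : 𝒱₁(ℝ) × 𝒟(ℝ) → 𝒱₁(ℝ), (φ, η) ↦ φ ∘ η, is continuous: for every φ₁ ∈ 𝒱₁(ℝ), η₁ ∈ 𝒟(ℝ), and ε > 0, there exists δ > 0 such that for all φ₂ ∈ 𝒱₁(ℝ) and η₂ ∈ 𝒟(ℝ) with ‖φ₁ − φ₂‖_{1,1} < δ and ‖η₁ − η₂‖_{1,1} < δ, one has ‖φ₁ ∘ η₁ − φ₂ ∘ η₂‖_{1,1} < ε. -/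
/-
Write `w = φ₁ ∘ η₁ - φ₂ ∘ η₂`, so that
`w' = (φ₁' ∘ η₁ - φ₁' ∘ η₂) η₁' + ((φ₁' - φ₂') ∘ η₂) η₁' + (φ₂' ∘ η₂) (η₁' - η₂')`.
All terms other than the first are controlled, pointwise and in `L²`, by the size of `φ₁ - φ₂` and
`η₁ - η₂`; for the terms composed with `η₂` this is the change of variables `y = η₂ x`, which costs
a factor `2 / a₁` because `η₂' ≥ a₁ / 2` once `δ ≤ a₁ / 2`. The first term is small pointwise
because `φ₁'` is uniformly continuous (continuous and vanishing at infinity). It is small in `L²`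
because `φ₁' ∈ L²`: where `|η₁ x| ≤ R + 1` it is at most `ω²` on a set of measure at most
`(2R + 2) / a₁`, and elsewhere `η₁ x` and `η₂ x` both lie in the tail `|y| > R`, which carries
little of `∫ φ₁'²`.
-/

open Filter MeasureTheory

/-- `u` belongs to `𝒱₁(ℝ)` with derivative bound `M`. -/
def InV1 (u : ℝ → ℝ) (M : ℝ) : Prop :=
  ContDiff ℝ 1 u ∧ (∀ x : ℝ, |deriv u x| ≤ M) ∧
  Integrable (fun x : ℝ => (u x) ^ 2) ∧
  Integrable (fun x : ℝ => (deriv u x) ^ 2) ∧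
  Tendsto (deriv u) (cocompact ℝ) (nhds 0)

/-- The norm `‖u‖_{1,1} = ‖u‖_{C¹} + ‖u‖_{H¹}`. -/
noncomputable def norm11 (u : ℝ → ℝ) : ℝ :=
  (⨆ x : ℝ, |u x|) + (⨆ x : ℝ, |deriv u x|) +
    Real.sqrt ((∫ x : ℝ, (u x) ^ 2) + ∫ x : ℝ, (deriv u x) ^ 2)

open Set Topology

theorem integral_comp_le_of_le_deriv {η F : ℝ → ℝ} {a : ℝ} (ha : 0 < a)
    (hη : Differentiable ℝ η) (hd : ∀ x, a ≤ deriv η x) (hF0 : ∀ x, 0 ≤ F x)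
    (hF : Integrable F) :
    Integrable (fun x => F (η x)) ∧ ∫ x, F (η x) ≤ a⁻¹ * ∫ x, F x := by
  have hder : ∀ x ∈ univ, HasDerivWithinAt η (deriv η x) univ x :=
    fun x _ => (hη x).hasDerivAt.hasDerivWithinAt
  have hinj : InjOn η univ :=
    (strictMono_of_deriv_pos fun x => ha.trans_le (hd x)).injective.injOn
  have hpos : ∀ x, 0 < |deriv η x| := fun x => (ha.trans_le ((hd x).trans (le_abs_self _)))
  have hJ : Integrable fun x => |deriv η x| * F (η x) := by
    simpa using (integrableOn_image_iff_integrableOn_abs_deriv_smul MeasurableSet.univ hder hinj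
      F).1 hF.integrableOn
  have hle : ∀ x, F (η x) ≤ a⁻¹ * (|deriv η x| * F (η x)) := fun x => by
    rw [← div_eq_inv_mul, le_div_iff₀ ha, mul_comm]
    exact mul_le_mul_of_nonneg_right ((hd x).trans (le_abs_self _)) (hF0 _)
  -- `F ∘ η` need not be measurable for a merely integrable `F`; dividing by `|η'|` recovers it.
  have hmeas : AEStronglyMeasurable (fun x => F (η x)) := by
    have h : (fun x => F (η x)) = fun x => |deriv η x|⁻¹ * (|deriv η x| * F (η x)) :=
      funext fun x => (inv_mul_cancel_left₀ (hpos x).ne' _).symm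
    rw [h]
    exact (measurable_deriv η).abs.inv.aestronglyMeasurable.mul hJ.aestronglyMeasurable
  have hFη : Integrable fun x => F (η x) :=
    (hJ.const_mul a⁻¹).mono' hmeas (ae_of_all _ fun x => by
      rw [Real.norm_eq_abs, abs_of_nonneg (hF0 _)]; exact hle x)
  refine ⟨hFη, ?_⟩
  calc ∫ x, F (η x) ≤ ∫ x, a⁻¹ * (|deriv η x| * F (η x)) :=
        integral_mono hFη (hJ.const_mul _) hle
    _ = a⁻¹ * ∫ x in η '' univ, F x := by
        rw [integral_const_mul, integral_image_eq_integral_abs_deriv_smul MeasurableSet.univ hder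
          hinj, setIntegral_univ]
        rfl
    _ ≤ a⁻¹ * ∫ x, F x :=
        mul_le_mul_of_nonneg_left (setIntegral_le_integral hF (ae_of_all _ hF0))
          (inv_nonneg.2 ha.le)

theorem integral_le_add_of_le {u P Q : ℝ → ℝ} {c d : ℝ} (hu : ∀ x, 0 ≤ u x)
    (hP : Integrable P) (hQ : Integrable Q) (h : ∀ x, u x ≤ c * P x + d * Q x) :
    ∫ x, u x ≤ c * (∫ x, P x) + d * ∫ x, Q x :=
  calc ∫ x, u x ≤ ∫ x, (c * P x + d * Q x) :=
        integral_mono_of_nonneg (ae_of_all _ hu) ((hP.const_mul c).add (hQ.const_mul d))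
          (ae_of_all _ h)
    _ = c * (∫ x, P x) + d * ∫ x, Q x := by
        rw [integral_add (hP.const_mul c) (hQ.const_mul d), integral_const_mul,
          integral_const_mul]

theorem integral_le_add_add_of_le {u P Q R : ℝ → ℝ} {c d e : ℝ} (hu : ∀ x, 0 ≤ u x)
    (hP : Integrable P) (hQ : Integrable Q) (hR : Integrable R)
    (h : ∀ x, u x ≤ c * P x + d * Q x + e * R x) :
    ∫ x, u x ≤ c * (∫ x, P x) + d * (∫ x, Q x) + e * ∫ x, R x := by
  have hPQ : Integrable fun x => c * P x + d * Q x := (hP.const_mul c).add (hQ.const_mul d)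
  calc ∫ x, u x ≤ ∫ x, (c * P x + d * Q x + e * R x) :=
        integral_mono_of_nonneg (ae_of_all _ hu) (hPQ.add (hR.const_mul e)) (ae_of_all _ h)
    _ = c * (∫ x, P x) + d * (∫ x, Q x) + e * ∫ x, R x := by
        rw [integral_add hPQ (hR.const_mul e), integral_add (hP.const_mul c) (hQ.const_mul d),
          integral_const_mul, integral_const_mul, integral_const_mul]

theorem integrable_sq_sub {p q : ℝ → ℝ} (hp : Continuous p) (hq : Continuous q)
    (hpi : Integrable fun x => p x ^ 2) (hqi : Integrable fun x => q x ^ 2) :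
    Integrable fun x => (p x - q x) ^ 2 :=
  (((memLp_two_iff_integrable_sq hp.aestronglyMeasurable).2 hpi).sub
    ((memLp_two_iff_integrable_sq hq.aestronglyMeasurable).2 hqi)).integrable_sq

theorem abs_sub_le_of_abs_deriv_le {u : ℝ → ℝ} {M : ℝ} (hu : Differentiable ℝ u)
    (h : ∀ x, |deriv u x| ≤ M) (x y : ℝ) : |u x - u y| ≤ M * |x - y| := by
  simpa using convex_univ.norm_image_sub_le_of_norm_deriv_le (fun z _ => hu z) (fun z _ => h z)
    (mem_univ y) (mem_univ x)

theorem abs_le_of_integrable_sq {u : ℝ → ℝ} {K : ℝ} (hu : ∀ x y, |u x - u y| ≤ K * |x - y|)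
    (hi : Integrable fun x => u x ^ 2) (x : ℝ) : |u x| ≤ K + 1 + ∫ y, u y ^ 2 := by
  by_contra! hlt
  have hK : 0 ≤ K := by simpa using (abs_nonneg _).trans (hu (x + 1) x)
  have hI : 0 ≤ ∫ y, u y ^ 2 := integral_nonneg fun _ => sq_nonneg _
  have hlow : ∀ y ∈ Icc x (x + 1), (|u x| - K) ^ 2 ≤ u y ^ 2 := by
    intro y hy
    have hyx : |y - x| ≤ 1 := abs_le.2 ⟨by linarith [hy.1], by linarith [hy.2]⟩
    have h1 : |u x| - K ≤ |u y| := by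
      have := abs_sub_abs_le_abs_sub (u x) (u y)
      rw [abs_sub_comm] at this
      nlinarith [hu y x]
    rw [← sq_abs (u y)]
    exact pow_le_pow_left₀ (by linarith) h1 2
  have hint : (|u x| - K) ^ 2 ≤ ∫ y in Icc x (x + 1), u y ^ 2 := by
    simpa using setIntegral_ge_of_const_le_real measurableSet_Icc
      (by simp) hlow hi.integrableOn
  have hsub := setIntegral_le_integral (s := Icc x (x + 1)) hi
    (ae_of_all _ fun y => sq_nonneg (u y))
  nlinarith

theorem eventually_nhds_zero_le {g : ℝ → ℝ} (hg : Continuous g) (hg0 : g 0 = 0) {t : ℝ}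
    (ht : 0 < t) : ∀ᶠ δ in 𝓝 0, g δ ≤ t :=
  hg.continuousAt.eventually (eventually_le_nhds (by rwa [hg0]))

theorem exists_setIntegral_compl_Icc_le {g : ℝ → ℝ} (hg : Integrable g) {c : ℝ} (hc : 0 < c) :
    ∃ R ≥ 0, ∫ y in (Icc (-R) R)ᶜ, g y ≤ c := by
  have hanti : Antitone fun R : ℝ => (Icc (-R) R)ᶜ :=
    fun R R' h => compl_subset_compl.2 (Icc_subset_Icc (neg_le_neg h) h)
  have hempty : ⋂ R : ℝ, (Icc (-R) R)ᶜ = ∅ := by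
    ext y
    simpa using ⟨|y|, neg_abs_le y, le_abs_self y⟩
  have ht := tendsto_setIntegral_of_antitone (μ := volume) (fun _ => measurableSet_Icc.compl)
    hanti ⟨0, hg.integrableOn⟩
  rw [hempty, setIntegral_empty] at ht
  obtain ⟨R, hR, hR0⟩ :=
    ((ht.eventually (eventually_le_nhds hc)).and (eventually_ge_atTop 0)).exists
  exact ⟨R, hR0, hR⟩

theorem sq_sub_le_indicator_add_tail {f : ℝ → ℝ} {R ω y₁ y₂ : ℝ} (hy : |y₁ - y₂| ≤ 1)
    (hf : |f y₁ - f y₂| ≤ ω) :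
    (f y₁ - f y₂) ^ 2 ≤ (Icc (-(R + 1)) (R + 1)).indicator (fun _ => ω ^ 2) y₁ +
      2 * (Icc (-R) R)ᶜ.indicator (fun y => f y ^ 2) y₁ +
      2 * (Icc (-R) R)ᶜ.indicator (fun y => f y ^ 2) y₂ := by
  have hT : ∀ y, 0 ≤ (Icc (-R) R)ᶜ.indicator (fun y => f y ^ 2) y :=
    indicator_nonneg fun y _ => sq_nonneg (f y)
  by_cases h₁ : y₁ ∈ Icc (-(R + 1)) (R + 1)
  · rw [indicator_of_mem h₁]
    nlinarith [sq_le_sq' (abs_le.1 hf).1 (abs_le.1 hf).2, hT y₁, hT y₂]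
  · have hy' := abs_le.1 hy
    have h₁' : y₁ ∈ (Icc (-R) R)ᶜ := fun h => h₁ ⟨by linarith [h.1], by linarith [h.2]⟩
    have h₂' : y₂ ∈ (Icc (-R) R)ᶜ := fun h => h₁ ⟨by linarith [h.1], by linarith [h.2]⟩
    rw [indicator_of_notMem h₁, indicator_of_mem h₁', indicator_of_mem h₂']
    nlinarith [sq_nonneg (f y₁ + f y₂)]

theorem exists_integral_sq_comp_sub_comp_le {f : ℝ → ℝ} (hf : UniformContinuous f)
    (hf2 : Integrable fun x => f x ^ 2) {a θ : ℝ} (ha : 0 < a) (hθ : 0 < θ) :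
    ∃ δ > 0, ∀ η₁ η₂ : ℝ → ℝ, Differentiable ℝ η₁ → Differentiable ℝ η₂ →
      (∀ x, a ≤ deriv η₁ x) → (∀ x, a ≤ deriv η₂ x) → (∀ x, |η₁ x - η₂ x| ≤ δ) →
      ∫ x, (f (η₁ x) - f (η₂ x)) ^ 2 ≤ θ := by
  obtain ⟨R, hR0, hR⟩ := exists_setIntegral_compl_Icc_le hf2 (c := a * θ / 8) (by positivity)
  obtain ⟨ω, hω0, hω⟩ := (eventually_nhds_zero_le (g := fun ω => ω ^ 2 * (2 * R + 2))
    (by fun_prop) (by simp) (t := a * θ / 2) (by positivity)).exists_gt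
  obtain ⟨δ, hδ0, hδ⟩ := Metric.uniformContinuous_iff_le.1 hf ω hω0
  set T := (Icc (-R) R)ᶜ.indicator fun y => f y ^ 2
  set G := fun y => (Icc (-(R + 1)) (R + 1)).indicator (fun _ => ω ^ 2) y + 2 * T y
  have hT : Integrable T := hf2.indicator measurableSet_Icc.compl
  have hT0 : ∀ y, 0 ≤ T y := indicator_nonneg fun y _ => sq_nonneg (f y)
  have hI : Integrable ((Icc (-(R + 1)) (R + 1)).indicator fun _ => ω ^ 2) :=
    (integrable_indicator_iff measurableSet_Icc).2 (integrableOn_const (by simp))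
  have hG0 : ∀ y, 0 ≤ G y := fun y =>
    add_nonneg (indicator_nonneg (fun _ _ => sq_nonneg ω) y) (mul_nonneg zero_le_two (hT0 y))
  have hGint : ∫ y, G y = ω ^ 2 * (2 * R + 2) + 2 * ∫ y, T y := by
    rw [integral_add hI (hT.const_mul 2), integral_indicator measurableSet_Icc, setIntegral_const,
      Real.volume_real_Icc_of_le (by linarith), integral_const_mul, smul_eq_mul]
    ring
  refine ⟨min δ 1, lt_min hδ0 one_pos, fun η₁ η₂ hη₁ hη₂ hd₁ hd₂ hclose => ?_⟩
  obtain ⟨hGη, hGle⟩ := integral_comp_le_of_le_deriv ha hη₁ hd₁ hG0 (hI.add (hT.const_mul 2))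
  obtain ⟨hTη, hTle⟩ := integral_comp_le_of_le_deriv ha hη₂ hd₂ hT0 hT
  have hTR : ∫ y, T y ≤ a * θ / 8 := by rwa [integral_indicator measurableSet_Icc.compl]
  calc ∫ x, (f (η₁ x) - f (η₂ x)) ^ 2 ≤ 1 * (∫ x, G (η₁ x)) + 2 * ∫ x, T (η₂ x) := by
        refine integral_le_add_of_le (fun x => sq_nonneg _) hGη hTη fun x => ?_
        have hx := hclose x
        simpa [G, add_assoc] using sq_sub_le_indicator_add_tail (R := R)
          (hx.trans (min_le_right _ _))
          (hδ (by simpa [Real.dist_eq] using hx.trans (min_le_left _ _)))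
    _ ≤ a⁻¹ * (ω ^ 2 * (2 * R + 2) + 4 * ∫ y, T y) := by
        rw [hGint] at hGle
        linarith
    _ ≤ a⁻¹ * (a * θ / 2 + 4 * (a * θ / 8)) := by gcongr
    _ = θ := by field_simp; ring

theorem InV1.sub {u v : ℝ → ℝ} {M N : ℝ} (hu : InV1 u M) (hv : InV1 v N) :
    InV1 (fun x => u x - v x) (M + N) := by
  obtain ⟨huc, hub, hui, hudi, hut⟩ := hu
  obtain ⟨hvc, hvb, hvi, hvdi, hvt⟩ := hv
  have hderiv : deriv (fun x => u x - v x) = fun x => deriv u x - deriv v x :=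
    funext fun x => deriv_fun_sub (huc.differentiable one_ne_zero x)
      (hvc.differentiable one_ne_zero x)
  refine ⟨huc.sub hvc, fun x => ?_, integrable_sq_sub huc.continuous hvc.continuous hui hvi, ?_, ?_⟩
  · rw [hderiv]
    exact (abs_sub _ _).trans (add_le_add (hub x) (hvb x))
  · rw [hderiv]
    exact integrable_sq_sub (huc.continuous_deriv le_rfl) (hvc.continuous_deriv le_rfl) hudi hvdi
  · simpa [hderiv] using hut.sub hvt

theorem InD.sub {η₁ η₂ : ℝ → ℝ} {a₁ b₁ a₂ b₂ : ℝ} (h₁ : InD η₁ a₁ b₁) (h₂ : InD η₂ a₂ b₂) :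
    InV1 (fun x => η₁ x - η₂ x) (max (b₁ - a₂) (b₂ - a₁)) := by
  obtain ⟨h₁c, h₁b, h₁i, h₁di, h₁t⟩ := h₁
  obtain ⟨h₂c, h₂b, h₂i, h₂di, h₂t⟩ := h₂
  have hderiv : deriv (fun x => η₁ x - η₂ x) = fun x => deriv η₁ x - deriv η₂ x :=
    funext fun x => deriv_fun_sub (h₁c.differentiable one_ne_zero x)
      (h₂c.differentiable one_ne_zero x)
  refine ⟨h₁c.sub h₂c, fun x => ?_, ?_, ?_, ?_⟩
  · rw [hderiv, abs_sub_le_iff]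
    constructor <;> linarith [h₁b x, h₂b x, le_max_left (b₁ - a₂) (b₂ - a₁),
      le_max_right (b₁ - a₂) (b₂ - a₁)]
  · simpa using integrable_sq_sub (h₁c.continuous.sub continuous_id)
      (h₂c.continuous.sub continuous_id) h₁i h₂i
  · rw [hderiv]
    simpa using integrable_sq_sub ((h₁c.continuous_deriv le_rfl).sub continuous_const)
      ((h₂c.continuous_deriv le_rfl).sub continuous_const) h₁di h₂di
  · simpa [hderiv] using h₁t.sub h₂t

def Close11 (u v : ℝ → ℝ) (δ : ℝ) : Prop :=
  (∀ x, |u x - v x| ≤ δ) ∧ (∀ x, |deriv u x - deriv v x| ≤ δ) ∧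
    (∫ x, (u x - v x) ^ 2) + ∫ x, (deriv u x - deriv v x) ^ 2 ≤ δ ^ 2

theorem Close11.integral_sq_sub_le {u v : ℝ → ℝ} {δ : ℝ} (h : Close11 u v δ) :
    ∫ x, (u x - v x) ^ 2 ≤ δ ^ 2 := by
  have : 0 ≤ ∫ x, (deriv u x - deriv v x) ^ 2 := integral_nonneg fun _ => sq_nonneg _
  linarith [h.2.2]

theorem Close11.integral_sq_deriv_sub_le {u v : ℝ → ℝ} {δ : ℝ} (h : Close11 u v δ) :
    ∫ x, (deriv u x - deriv v x) ^ 2 ≤ δ ^ 2 := by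
  have : 0 ≤ ∫ x, (u x - v x) ^ 2 := integral_nonneg fun _ => sq_nonneg _
  linarith [h.2.2]

-- `⨆` of an unbounded family is `0`: the pointwise bounds need `u - v` to be bounded.
theorem close11_of_norm11_sub_lt {u v : ℝ → ℝ} {M δ : ℝ} (hu : Differentiable ℝ u)
    (hv : Differentiable ℝ v) (huv : InV1 (fun x => u x - v x) M)
    (h : norm11 (fun x => u x - v x) < δ) : Close11 u v δ := by
  obtain ⟨huvc, huvb, huvi, -, -⟩ := huv
  have hderiv : deriv (fun x => u x - v x) = fun x => deriv u x - deriv v x :=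
    funext fun x => deriv_fun_sub (hu x) (hv x)
  have hB0 : BddAbove (range fun x => |u x - v x|) :=
    ⟨_, forall_mem_range.2 (abs_le_of_integrable_sq
      (abs_sub_le_of_abs_deriv_le (huvc.differentiable one_ne_zero) huvb) huvi)⟩
  have hB1 : BddAbove (range fun x => |deriv u x - deriv v x|) :=
    ⟨M, forall_mem_range.2 fun x => by simpa [hderiv] using huvb x⟩
  have hS0 := Real.iSup_nonneg fun x => abs_nonneg (u x - v x)
  have hS1 := Real.iSup_nonneg fun x => abs_nonneg (deriv u x - deriv v x)
  simp only [norm11, hderiv] at h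
  set I := (∫ x, (u x - v x) ^ 2) + ∫ x, (deriv u x - deriv v x) ^ 2
  have hI := Real.sqrt_nonneg I
  refine ⟨fun x => (le_ciSup hB0 x).trans (by linarith), fun x => (le_ciSup hB1 x).trans
    (by linarith), ((Real.sqrt_lt' (by linarith)).1 (by linarith)).le⟩

theorem norm11_sub_le_of_close11 {u v : ℝ → ℝ} {t : ℝ} (hu : Differentiable ℝ u)
    (hv : Differentiable ℝ v) (ht : 0 ≤ t) (h : Close11 u v t) :
    norm11 (fun x => u x - v x) ≤ 3 * t := by
  obtain ⟨h0, h1, h2⟩ := h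
  have hsqrt := Real.sqrt_le_sqrt h2
  rw [Real.sqrt_sq ht] at hsqrt
  simp only [norm11, deriv_fun_sub (hu _) (hv _)]
  linarith [Real.iSup_le h0 ht, Real.iSup_le h1 ht]

section Composition

variable {φ₁ η₁ : ℝ → ℝ}

theorem deriv_comp_sub_deriv_comp {φ₂ η₂ : ℝ → ℝ} (hφ₁ : Differentiable ℝ φ₁)
    (hφ₂ : Differentiable ℝ φ₂) (hη₁ : Differentiable ℝ η₁) (hη₂ : Differentiable ℝ η₂) (x : ℝ) :
    deriv (φ₁ ∘ η₁) x - deriv (φ₂ ∘ η₂) x =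
      (deriv φ₁ (η₁ x) - deriv φ₁ (η₂ x)) * deriv η₁ x +
        (deriv φ₁ (η₂ x) - deriv φ₂ (η₂ x)) * deriv η₁ x +
          deriv φ₂ (η₂ x) * (deriv η₁ x - deriv η₂ x) := by
  rw [deriv_comp x (hφ₁ _) (hη₁ x), deriv_comp x (hφ₂ _) (hη₂ x)]
  ring

theorem eventually_abs_comp_sub_comp_le {K t : ℝ} (hφ₁ : ∀ x y, |φ₁ x - φ₁ y| ≤ K * |x - y|)
    (ht : 0 < t) :
    ∀ᶠ δ in 𝓝 0, ∀ φ₂ η₂ : ℝ → ℝ, Close11 φ₁ φ₂ δ → Close11 η₁ η₂ δ →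
      ∀ x, |(φ₁ ∘ η₁) x - (φ₂ ∘ η₂) x| ≤ t := by
  have hK : 0 ≤ K := by simpa using (abs_nonneg _).trans (hφ₁ 1 0)
  filter_upwards [eventually_nhds_zero_le (g := fun δ => (K + 1) * δ) (by fun_prop) (by simp) ht]
    with δ hδ φ₂ η₂ hφ hη x
  calc |φ₁ (η₁ x) - φ₂ (η₂ x)| ≤ |φ₁ (η₁ x) - φ₁ (η₂ x)| + |φ₁ (η₂ x) - φ₂ (η₂ x)| :=
        abs_sub_le _ _ _
    _ ≤ K * δ + δ := add_le_add ((hφ₁ _ _).trans (by gcongr; exact hη.1 x)) (hφ.1 _)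
    _ ≤ t := by linarith

theorem eventually_abs_deriv_comp_sub_deriv_comp_le {M b t : ℝ} (hφ₁ : Differentiable ℝ φ₁)
    (hf : UniformContinuous (deriv φ₁)) (hM : ∀ x, |deriv φ₁ x| ≤ M)
    (hη₁ : Differentiable ℝ η₁) (hb : ∀ x, |deriv η₁ x| ≤ b) (ht : 0 < t) :
    ∀ᶠ δ in 𝓝 0, ∀ φ₂ η₂ : ℝ → ℝ, Differentiable ℝ φ₂ → Differentiable ℝ η₂ →
      Close11 φ₁ φ₂ δ → Close11 η₁ η₂ δ → ∀ x, |deriv (φ₁ ∘ η₁) x - deriv (φ₂ ∘ η₂) x| ≤ t := by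
  obtain ⟨ω, hω0, hω⟩ := (eventually_nhds_zero_le (g := fun ω => b * ω) (by fun_prop) (by simp)
    (half_pos ht)).exists_gt
  obtain ⟨δω, hδω0, hmod⟩ := Metric.uniformContinuous_iff_le.1 hf ω hω0
  filter_upwards [eventually_nhds_zero_le (g := fun δ => b * δ + (M + δ) * δ) (by fun_prop)
    (by simp) (half_pos ht), eventually_le_nhds hδω0] with δ hδ hδω φ₂ η₂ hφ₂ hη₂ hφ hη x
  have hΔ : |deriv φ₁ (η₁ x) - deriv φ₁ (η₂ x)| ≤ ω := by
    simpa [Real.dist_eq] using hmod (by simpa [Real.dist_eq] using (hη.1 x).trans hδω)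
  have hf₂ : |deriv φ₂ (η₂ x)| ≤ M + δ := by
    have := abs_sub_abs_le_abs_sub (deriv φ₂ (η₂ x)) (deriv φ₁ (η₂ x))
    rw [abs_sub_comm] at this
    linarith [hM (η₂ x), hφ.2.1 (η₂ x)]
  rw [deriv_comp_sub_deriv_comp hφ₁ hφ₂ hη₁ hη₂]
  calc _ ≤ _ := abs_add_three _ _ _
    _ ≤ ω * b + δ * b + (M + δ) * δ := by
        simp only [abs_mul]
        gcongr
        exacts [hb x, (abs_nonneg _).trans (hφ.2.1 0), hφ.2.1 _, hb x, (abs_nonneg _).trans hf₂,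
          hη.2.1 x]
    _ ≤ t := by linarith

theorem eventually_integral_sq_comp_sub_comp_le {K a t : ℝ}
    (hφ₁ : ∀ x y, |φ₁ x - φ₁ y| ≤ K * |x - y|) (hη₁ : ∀ x, a ≤ deriv η₁ x) (ha : 0 < a)
    (ht : 0 < t) :
    ∀ᶠ δ in 𝓝 0, ∀ φ₂ η₂ : ℝ → ℝ, Differentiable ℝ η₂ →
      Integrable (fun x => (φ₁ x - φ₂ x) ^ 2) → Integrable (fun x => (η₁ x - η₂ x) ^ 2) →
      Close11 φ₁ φ₂ δ → Close11 η₁ η₂ δ → ∫ x, ((φ₁ ∘ η₁) x - (φ₂ ∘ η₂) x) ^ 2 ≤ t ^ 2 / 2 := by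
  filter_upwards [eventually_nhds_zero_le
    (g := fun δ => 2 * K ^ 2 * δ ^ 2 + 2 * ((a / 2)⁻¹ * δ ^ 2)) (by fun_prop) (by simp)
    (t := t ^ 2 / 2) (by positivity), eventually_le_nhds (half_pos ha)]
    with δ hδ hδa φ₂ η₂ hη₂ hψ hv hφ hη
  have hd₂ : ∀ x, a / 2 ≤ deriv η₂ x := fun x => by linarith [hη₁ x, (abs_le.1 (hη.2.1 x)).2]
  obtain ⟨hψη, hψη_le⟩ := integral_comp_le_of_le_deriv (half_pos ha) hη₂ hd₂
    (fun y => sq_nonneg (φ₁ y - φ₂ y)) hψ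
  calc ∫ x, ((φ₁ ∘ η₁) x - (φ₂ ∘ η₂) x) ^ 2
      ≤ 2 * K ^ 2 * (∫ x, (η₁ x - η₂ x) ^ 2) + 2 * ∫ x, (φ₁ (η₂ x) - φ₂ (η₂ x)) ^ 2 := by
        refine integral_le_add_of_le (fun _ => sq_nonneg _) hv hψη fun x => ?_
        have hlip : (φ₁ (η₁ x) - φ₁ (η₂ x)) ^ 2 ≤ K ^ 2 * (η₁ x - η₂ x) ^ 2 := by
          simpa [mul_pow] using pow_le_pow_left₀ (abs_nonneg _) (hφ₁ (η₁ x) (η₂ x)) 2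
        have hsplit := add_sq_le (a := φ₁ (η₁ x) - φ₁ (η₂ x)) (b := φ₁ (η₂ x) - φ₂ (η₂ x))
        simp only [sub_add_sub_cancel] at hsplit
        simp only [Function.comp_apply]
        linarith
    _ ≤ 2 * K ^ 2 * δ ^ 2 + 2 * ((a / 2)⁻¹ * δ ^ 2) := by
        gcongr
        · exact hη.integral_sq_sub_le
        · exact hψη_le.trans (by gcongr; exact hφ.integral_sq_sub_le)
    _ ≤ t ^ 2 / 2 := hδ

theorem eventually_integral_sq_deriv_comp_sub_deriv_comp_le {M a b t : ℝ}
    (hφ₁ : Differentiable ℝ φ₁) (hf : UniformContinuous (deriv φ₁))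
    (hf2 : Integrable fun x => deriv φ₁ x ^ 2) (hM : ∀ x, |deriv φ₁ x| ≤ M)
    (hη₁ : Differentiable ℝ η₁) (hd : ∀ x, a ≤ deriv η₁ x ∧ deriv η₁ x ≤ b) (ha : 0 < a)
    (ht : 0 < t) :
    ∀ᶠ δ in 𝓝 0, ∀ φ₂ η₂ : ℝ → ℝ, Differentiable ℝ φ₂ → Differentiable ℝ η₂ →
      Integrable (fun x => (deriv φ₁ x - deriv φ₂ x) ^ 2) →
      Integrable (fun x => (deriv η₁ x - deriv η₂ x) ^ 2) →
      Close11 φ₁ φ₂ δ → Close11 η₁ η₂ δ →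
      ∫ x, (deriv (φ₁ ∘ η₁) x - deriv (φ₂ ∘ η₂) x) ^ 2 ≤ t ^ 2 / 2 := by
  have ha2 := half_pos ha
  obtain ⟨θ, hθ0, hθ⟩ := (eventually_nhds_zero_le (g := fun θ => 3 * b ^ 2 * θ) (by fun_prop)
    (by simp) (t := t ^ 2 / 4) (by positivity)).exists_gt
  obtain ⟨δθ, hδθ0, hmod⟩ := exists_integral_sq_comp_sub_comp_le hf hf2 ha2 hθ0
  filter_upwards [eventually_nhds_zero_le
    (g := fun δ => 3 * b ^ 2 * ((a / 2)⁻¹ * δ ^ 2) + 3 * (M + δ) ^ 2 * δ ^ 2) (by fun_prop)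
    (by simp) (t := t ^ 2 / 4) (by positivity), eventually_le_nhds hδθ0,
    eventually_le_nhds ha2] with δ hδ hδθ hδa φ₂ η₂ hφ₂ hη₂ hψ' hv' hφ hη
  have hd₁ : ∀ x, a / 2 ≤ deriv η₁ x := fun x => by linarith [(hd x).1]
  have hd₂ : ∀ x, a / 2 ≤ deriv η₂ x := fun x => by
    linarith [(hd x).1, (abs_le.1 (hη.2.1 x)).2]
  have hf₂ : ∀ y, |deriv φ₂ y| ≤ M + δ := fun y => by
    have := abs_sub_abs_le_abs_sub (deriv φ₂ y) (deriv φ₁ y)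
    rw [abs_sub_comm] at this
    linarith [hM y, hφ.2.1 y]
  obtain ⟨hfη₁, -⟩ := integral_comp_le_of_le_deriv ha2 hη₁ hd₁ (fun y => sq_nonneg (deriv φ₁ y)) hf2
  obtain ⟨hfη₂, -⟩ := integral_comp_le_of_le_deriv ha2 hη₂ hd₂ (fun y => sq_nonneg (deriv φ₁ y)) hf2
  obtain ⟨hψη, hψη_le⟩ := integral_comp_le_of_le_deriv ha2 hη₂ hd₂
    (fun y => sq_nonneg (deriv φ₁ y - deriv φ₂ y)) hψ'
  have hΔ := integrable_sq_sub (hf.continuous.comp hη₁.continuous)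
    (hf.continuous.comp hη₂.continuous) hfη₁ hfη₂
  calc ∫ x, (deriv (φ₁ ∘ η₁) x - deriv (φ₂ ∘ η₂) x) ^ 2
      ≤ 3 * b ^ 2 * (∫ x, (deriv φ₁ (η₁ x) - deriv φ₁ (η₂ x)) ^ 2) +
          3 * b ^ 2 * (∫ x, (deriv φ₁ (η₂ x) - deriv φ₂ (η₂ x)) ^ 2) +
          3 * (M + δ) ^ 2 * ∫ x, (deriv η₁ x - deriv η₂ x) ^ 2 := by
        refine integral_le_add_add_of_le (fun _ => sq_nonneg _) hΔ hψη hv' fun x => ?_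
        rw [deriv_comp_sub_deriv_comp hφ₁ hφ₂ hη₁ hη₂]
        set p := deriv φ₁ (η₁ x) - deriv φ₁ (η₂ x)
        set q := deriv φ₁ (η₂ x) - deriv φ₂ (η₂ x)
        set r := deriv φ₂ (η₂ x)
        set m := deriv η₁ x
        set s := deriv η₁ x - deriv η₂ x
        have hm : m ^ 2 ≤ b ^ 2 := sq_le_sq' (by linarith [hd x]) (hd x).2
        have hr : r ^ 2 ≤ (M + δ) ^ 2 := sq_le_sq' (abs_le.1 (hf₂ _)).1 (abs_le.1 (hf₂ _)).2
        nlinarith [sq_nonneg (p * m - q * m), sq_nonneg (p * m - r * s),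
          sq_nonneg (q * m - r * s), mul_le_mul_of_nonneg_left hm (sq_nonneg p),
          mul_le_mul_of_nonneg_left hm (sq_nonneg q), mul_le_mul_of_nonneg_left hr (sq_nonneg s)]
    _ ≤ 3 * b ^ 2 * θ + 3 * b ^ 2 * ((a / 2)⁻¹ * δ ^ 2) + 3 * (M + δ) ^ 2 * δ ^ 2 := by
        gcongr
        · exact hmod η₁ η₂ hη₁ hη₂ hd₁ hd₂ fun x => (hη.1 x).trans hδθ
        · exact hψη_le.trans (by gcongr; exact hφ.integral_sq_deriv_sub_le)
        · exact hη.integral_sq_deriv_sub_le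
    _ ≤ t ^ 2 / 2 := by linarith

theorem eventually_close11_comp {M₁ a₁ b₁ t : ℝ} (hφ₁ : InV1 φ₁ M₁)
    (hη₁ : InD η₁ a₁ b₁) (ha₁ : 0 < a₁) (ht : 0 < t) :
    ∀ᶠ δ in 𝓝 0, ∀ (φ₂ : ℝ → ℝ) (M₂ : ℝ) (η₂ : ℝ → ℝ) (a₂ b₂ : ℝ), InV1 φ₂ M₂ → InD η₂ a₂ b₂ →
      Close11 φ₁ φ₂ δ → Close11 η₁ η₂ δ → Close11 (φ₁ ∘ η₁) (φ₂ ∘ η₂) t := by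
  have ⟨hφ₁c, hφ₁b, _, hφ₁di, hφ₁t⟩ := hφ₁
  have ⟨hη₁c, hη₁b, _⟩ := hη₁
  have hφ₁d := hφ₁c.differentiable one_ne_zero
  have hη₁d := hη₁c.differentiable one_ne_zero
  have hlip := abs_sub_le_of_abs_deriv_le hφ₁d hφ₁b
  have hf := (hφ₁c.continuous_deriv le_rfl).uniformContinuous_of_tendsto_cocompact hφ₁t
  have hη₁b' : ∀ x, |deriv η₁ x| ≤ b₁ := fun x =>
    abs_le.2 ⟨by linarith [hη₁b x], (hη₁b x).2⟩
  filter_upwards [eventually_abs_comp_sub_comp_le (η₁ := η₁) hlip ht,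
    eventually_abs_deriv_comp_sub_deriv_comp_le hφ₁d hf hφ₁b hη₁d hη₁b' ht,
    eventually_integral_sq_comp_sub_comp_le hlip (fun x => (hη₁b x).1) ha₁ ht,
    eventually_integral_sq_deriv_comp_sub_deriv_comp_le hφ₁d hf hφ₁di hφ₁b hη₁d hη₁b ha₁ ht]
    with δ h0 h1 h2 h3 φ₂ M₂ η₂ a₂ b₂ hφ₂ hη₂ hφ hη
  have hφ₂d := hφ₂.1.differentiable one_ne_zero
  have hη₂d := hη₂.1.differentiable one_ne_zero
  obtain ⟨-, -, hψ, hψ', -⟩ := hφ₁.sub hφ₂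
  obtain ⟨-, -, hv, hv', -⟩ := hη₁.sub hη₂
  simp only [deriv_fun_sub (hφ₁d _) (hφ₂d _)] at hψ'
  simp only [deriv_fun_sub (hη₁d _) (hη₂d _)] at hv'
  refine ⟨h0 φ₂ η₂ hφ hη, h1 φ₂ η₂ hφ₂d hη₂d hφ hη, ?_⟩
  linarith [h2 φ₂ η₂ hη₂d hψ hv hφ hη, h3 φ₂ η₂ hφ₂d hη₂d hψ' hv' hφ hη]

end Composition

theorem composition_continuous_general (φ₁ : ℝ → ℝ) (M₁ : ℝ) (hφ₁ : InV1 φ₁ M₁)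
    (η₁ : ℝ → ℝ) (a₁ b₁ : ℝ) (ha₁ : 0 < a₁) (hη₁ : InD η₁ a₁ b₁)
    (ε : ℝ) (hε : 0 < ε) :
    ∃ δ : ℝ, 0 < δ ∧
      ∀ (φ₂ : ℝ → ℝ) (M₂ : ℝ), 0 < M₂ → InV1 φ₂ M₂ →
      ∀ (η₂ : ℝ → ℝ) (a₂ b₂ : ℝ), 0 < a₂ → a₂ < b₂ → InD η₂ a₂ b₂ →
        norm11 (fun x => φ₁ x - φ₂ x) < δ → norm11 (fun x => η₁ x - η₂ x) < δ →
        norm11 (fun x => φ₁ (η₁ x) - φ₂ (η₂ x)) < ε := by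
  obtain ⟨δ, hδ0, hδ⟩ :=
    (eventually_close11_comp hφ₁ hη₁ ha₁ (t := ε / 4) (by positivity)).exists_gt
  refine ⟨δ, hδ0, fun φ₂ M₂ _ hφ₂ η₂ a₂ b₂ _ _ hη₂ hφ hη => ?_⟩
  have hφ₁d := hφ₁.1.differentiable one_ne_zero
  have hφ₂d := hφ₂.1.differentiable one_ne_zero
  have hη₁d := hη₁.1.differentiable one_ne_zero
  have hη₂d := hη₂.1.differentiable one_ne_zero
  have hclose := hδ φ₂ M₂ η₂ a₂ b₂ hφ₂ hη₂ (close11_of_norm11_sub_lt hφ₁d hφ₂d (hφ₁.sub hφ₂) hφ)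
    (close11_of_norm11_sub_lt hη₁d hη₂d (hη₁.sub hη₂) hη)
  calc norm11 (fun x => φ₁ (η₁ x) - φ₂ (η₂ x)) ≤ 3 * (ε / 4) :=
        norm11_sub_le_of_close11 (hφ₁d.comp hη₁d) (hφ₂d.comp hη₂d) (by positivity) hclose
    _ < ε := by linarith

/-- The composition map `Comp¹ : 𝒱₁(ℝ) × 𝒟(ℝ) → 𝒱₁(ℝ)`, `(φ, η) ↦ φ ∘ η`, is continuous. -/
theorem composition_continuous (φ₁ : ℝ → ℝ) (M₁ : ℝ) (hM₁ : 0 < M₁) (hφ₁ : InV1 φ₁ M₁)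
    (η₁ : ℝ → ℝ) (a₁ b₁ : ℝ) (ha₁ : 0 < a₁) (hab₁ : a₁ < b₁) (hη₁ : InD η₁ a₁ b₁)
    (ε : ℝ) (hε : 0 < ε) :
    ∃ δ : ℝ, 0 < δ ∧
      ∀ (φ₂ : ℝ → ℝ) (M₂ : ℝ), 0 < M₂ → InV1 φ₂ M₂ →
      ∀ (η₂ : ℝ → ℝ) (a₂ b₂ : ℝ), 0 < a₂ → a₂ < b₂ → InD η₂ a₂ b₂ →
        norm11 (fun x => φ₁ x - φ₂ x) < δ → norm11 (fun x => η₁ x - η₂ x) < δ →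
        norm11 (fun x => φ₁ (η₁ x) - φ₂ (η₂ x)) < ε :=
  composition_continuous_general φ₁ M₁ hφ₁ η₁ a₁ b₁ ha₁ hη₁ ε hε
end

section
/- Let φ₁, φ₂ ∈ 𝒱₁(ℝ) with |φ₂'(x)| ≤ C₂ for all x, and let η₁, η₂ ∈ 𝒟(ℝ) with a₁ ≤ η₁'(x) for all x (a₁ > 0). Then √(∫_ℝ |φ₁(η₁(x)) − φ₂(η₂(x))|² dx) ≤ (1/√a₁) √(∫_ℝ |φ₁(y) − φ₂(y)|² dy) + C₂ √(∫_ℝ |η₁(x) − η₂(x)|² dx). -/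
open Filter MeasureTheory

/-!
Write `φ₁ ∘ η₁ - φ₂ ∘ η₂ = (φ₁ - φ₂) ∘ η₁ + (φ₂ ∘ η₁ - φ₂ ∘ η₂)` and use Minkowski's inequality
in `L²`. Substituting `y = η₁ x`, whose Jacobian is at least `a₁`, bounds the `L²` norm of the first
term by `a₁^(-1/2) ‖φ₁ - φ₂‖`; as only an inequality is wanted, the change of variables onto the
image of the injective map `η₁` suffices. The second term is pointwise at most `C₂ |η₁ - η₂|`,
because `|φ₂'| ≤ C₂` makes `φ₂` a `C₂`-Lipschitz map.
-/

open scoped ENNReal NNReal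

/-- Both sides vanish when `f ∉ L²`: the Bochner integral by convention, and `∞.toReal = 0`. -/
theorem sqrt_integral_sq_eq_toReal_eLpNorm {α : Type*} [MeasurableSpace α] {μ : Measure α}
    {f : α → ℝ} (hf : AEStronglyMeasurable f μ) :
    √(∫ x, f x ^ 2 ∂μ) = (eLpNorm f 2 μ).toReal := by
  by_cases hmem : MemLp f 2 μ
  · rw [hmem.eLpNorm_eq_integral_rpow_norm two_ne_zero ENNReal.ofNat_ne_top,
      ENNReal.toReal_ofReal (by positivity), Real.sqrt_eq_rpow]
    norm_num
  · have hsq : ¬Integrable (fun x => f x ^ 2) μ := (memLp_two_iff_integrable_sq hf).not.1 hmem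
    have htop : eLpNorm f 2 μ = ∞ := not_lt_top_iff.1 fun h => hmem ⟨hf, h⟩
    rw [integral_undef hsq, Real.sqrt_zero, htop, ENNReal.toReal_top]

theorem lintegral_comp_le_of_le_deriv {η : ℝ → ℝ} {a : ℝ} (ha : 0 < a)
    (hη : ∀ x, a ≤ deriv η x) (g : ℝ → ℝ≥0∞) :
    ENNReal.ofReal a * ∫⁻ x, g (η x) ≤ ∫⁻ y, g y := by
  have hpos : ∀ x, 0 < deriv η x := fun x => ha.trans_le (hη x)
  have hderiv : ∀ x ∈ Set.univ, HasDerivWithinAt η (deriv η x) Set.univ x := fun x _ =>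
    (differentiableAt_of_deriv_ne_zero (hpos x).ne').hasDerivAt.hasDerivWithinAt
  have hinj : Set.InjOn η Set.univ := (strictMono_of_deriv_pos hpos).injective.injOn
  calc ENNReal.ofReal a * ∫⁻ x, g (η x)
      = ∫⁻ x, ENNReal.ofReal a * g (η x) := (lintegral_const_mul' _ _ ENNReal.ofReal_ne_top).symm
    _ ≤ ∫⁻ x, ENNReal.ofReal |deriv η x| * g (η x) :=
        lintegral_mono fun x => by gcongr; exact (hη x).trans (le_abs_self _)
    _ = ∫⁻ y in η '' Set.univ, g y := by
        rw [lintegral_image_eq_lintegral_abs_deriv_mul MeasurableSet.univ hderiv hinj,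
          Measure.restrict_univ]
    _ ≤ ∫⁻ y, g y := setLIntegral_le_lintegral _ _

theorem eLpNorm_comp_le_of_le_deriv {E : Type*} [NormedAddCommGroup E] {η : ℝ → ℝ} {a : ℝ}
    (ha : 0 < a) (hη : ∀ x, a ≤ deriv η x) (g : ℝ → E) {p : ℝ≥0∞} (hp0 : p ≠ 0) (hp : p ≠ ∞) :
    eLpNorm (g ∘ η) p volume ≤ (ENNReal.ofReal a)⁻¹ ^ (1 / p.toReal) * eLpNorm g p volume := by
  have hp_pos : 0 < 1 / p.toReal := one_div_pos.2 (ENNReal.toReal_pos hp0 hp)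
  simp only [eLpNorm_eq_lintegral_rpow_enorm_toReal hp0 hp]
  rw [← ENNReal.mul_rpow_of_nonneg _ _ hp_pos.le]
  gcongr
  rw [← ENNReal.mul_le_iff_le_inv (ENNReal.ofReal_pos.2 ha).ne' ENNReal.ofReal_ne_top]
  exact lintegral_comp_le_of_le_deriv ha hη (fun y => ‖g y‖ₑ ^ p.toReal)

theorem LipschitzWith.eLpNorm_comp_sub_comp_le {α E F : Type*} [MeasurableSpace α]
    {μ : Measure α} [NormedAddCommGroup E] [NormedAddCommGroup F] {K : ℝ≥0} {f : E → F}
    (hf : LipschitzWith K f) (u v : α → E) (p : ℝ≥0∞) :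
    eLpNorm (f ∘ u - f ∘ v) p μ ≤ K * eLpNorm (u - v) p μ := by
  refine eLpNorm_le_mul_eLpNorm_of_ae_le_mul' (Eventually.of_forall fun x => ?_) p
  simpa only [edist_eq_enorm_sub, Pi.sub_apply, Function.comp_apply] using
    hf.edist_le_mul (u x) (v x)

theorem lipschitzWith_of_abs_deriv_le {f : ℝ → ℝ} {C : ℝ} (hf : Differentiable ℝ f)
    (hC : ∀ x, |deriv f x| ≤ C) : LipschitzWith C.toNNReal f :=
  lipschitzWith_of_nnnorm_deriv_le hf fun x => by
    simpa [← NNReal.coe_le_coe, (abs_nonneg _).trans (hC 0)] using hC x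

theorem InV1.memLp {u : ℝ → ℝ} {M : ℝ} (hu : InV1 u M) : MemLp u 2 :=
  (memLp_two_iff_integrable_sq hu.1.continuous.aestronglyMeasurable).2 hu.2.2.1

theorem InD.memLp_sub_id {η : ℝ → ℝ} {a b : ℝ} (hη : InD η a b) : MemLp (η - id) 2 :=
  (memLp_two_iff_integrable_sq (hη.1.continuous.sub continuous_id).aestronglyMeasurable).2
    hη.2.2.1

theorem InD.memLp_sub {η₁ η₂ : ℝ → ℝ} {a₁ b₁ a₂ b₂ : ℝ} (hη₁ : InD η₁ a₁ b₁)
    (hη₂ : InD η₂ a₂ b₂) : MemLp (η₁ - η₂) 2 :=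
  sub_sub_sub_cancel_right η₁ η₂ id ▸ hη₁.memLp_sub_id.sub hη₂.memLp_sub_id

theorem eLpNorm_comp_sub_comp_le {φ₁ φ₂ η₁ η₂ : ℝ → ℝ} {a : ℝ} {K : ℝ≥0} {p : ℝ≥0∞}
    (hφ₁ : Continuous φ₁) (hφ₂ : LipschitzWith K φ₂) (hη₁ : Continuous η₁) (hη₂ : Continuous η₂)
    (ha : 0 < a) (hη₁' : ∀ x, a ≤ deriv η₁ x) (hp1 : 1 ≤ p) (hp : p ≠ ∞) :
    eLpNorm (φ₁ ∘ η₁ - φ₂ ∘ η₂) p volume ≤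
      (ENNReal.ofReal a)⁻¹ ^ (1 / p.toReal) * eLpNorm (φ₁ - φ₂) p volume +
        K * eLpNorm (η₁ - η₂) p volume := by
  have hsplit : φ₁ ∘ η₁ - φ₂ ∘ η₂ = (φ₁ - φ₂) ∘ η₁ + (φ₂ ∘ η₁ - φ₂ ∘ η₂) := by ext; simp
  rw [hsplit]
  refine (eLpNorm_add_le ?_ ?_ hp1).trans (add_le_add
    (eLpNorm_comp_le_of_le_deriv ha hη₁' _ (zero_lt_one.trans_le hp1).ne' hp)
    (hφ₂.eLpNorm_comp_sub_comp_le η₁ η₂ p))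
  · exact ((hφ₁.sub hφ₂.continuous).comp hη₁).aestronglyMeasurable
  · exact ((hφ₂.continuous.comp hη₁).sub (hφ₂.continuous.comp hη₂)).aestronglyMeasurable

theorem composition_L2_diff_bound_general (φ₁ φ₂ η₁ η₂ : ℝ → ℝ) (C₂ : ℝ) (M₁ M₂ a₁ b₁ a₂ b₂ : ℝ)
    (hφ₁ : InV1 φ₁ M₁) (hφ₂ : InV1 φ₂ M₂)
    (hC₂ : ∀ x : ℝ, |deriv φ₂ x| ≤ C₂)
    (ha₁ : 0 < a₁)
    (hη₁ : InD η₁ a₁ b₁) (hη₂ : InD η₂ a₂ b₂) :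
    Real.sqrt (∫ x : ℝ, (φ₁ (η₁ x) - φ₂ (η₂ x)) ^ 2) ≤
      (1 / Real.sqrt a₁) * Real.sqrt (∫ y : ℝ, (φ₁ y - φ₂ y) ^ 2) +
      C₂ * Real.sqrt (∫ x : ℝ, (η₁ x - η₂ x) ^ 2) := by
  have hφ₁c := hφ₁.1.continuous
  have hφ₂c := hφ₂.1.continuous
  have hη₁c := hη₁.1.continuous
  have hη₂c := hη₂.1.continuous
  have hC₂0 : 0 ≤ C₂ := (abs_nonneg _).trans (hC₂ 0)
  have key := eLpNorm_comp_sub_comp_le hφ₁c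
    (lipschitzWith_of_abs_deriv_le (hφ₂.1.differentiable one_ne_zero) hC₂) hη₁c hη₂c ha₁
    (fun x => (hη₁.2.1 x).1) one_le_two ENNReal.ofNat_ne_top
  have hφ := hφ₁.memLp.sub hφ₂.memLp
  have hη := hη₁.memLp_sub hη₂
  have hL := sqrt_integral_sq_eq_toReal_eLpNorm (μ := volume)
    ((hφ₁c.comp hη₁c).sub (hφ₂c.comp hη₂c)).aestronglyMeasurable
  have hR₁ := sqrt_integral_sq_eq_toReal_eLpNorm hφ.aestronglyMeasurable
  have hR₂ := sqrt_integral_sq_eq_toReal_eLpNorm hη.aestronglyMeasurable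
  simp only [Pi.sub_apply, Function.comp_apply] at hL hR₁ hR₂
  rw [hL, hR₁, hR₂]
  calc _ ≤ _ := ENNReal.toReal_mono (by finiteness) key
    _ = _ := by
      rw [ENNReal.toReal_add (by finiteness) (by finiteness), ENNReal.toReal_mul,
        ENNReal.toReal_mul, ← ENNReal.toReal_rpow, ENNReal.toReal_inv, ENNReal.toReal_ofReal ha₁.le,
        ENNReal.coe_toReal, Real.coe_toNNReal _ hC₂0, ENNReal.toReal_ofNat, Real.inv_rpow ha₁.le,
        ← Real.sqrt_eq_rpow, one_div]

/-- For `φ₁, φ₂ ∈ 𝒱₁(ℝ)` with `|φ₂'| ≤ C₂` and `η₁, η₂ ∈ 𝒟(ℝ)` with `a₁ ≤ η₁'`: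
`‖φ₁ ∘ η₁ − φ₂ ∘ η₂‖_{L²} ≤ (1/√a₁) ‖φ₁ − φ₂‖_{L²} + C₂ ‖η₁ − η₂‖_{L²}`. -/
theorem composition_L2_diff_bound (φ₁ φ₂ η₁ η₂ : ℝ → ℝ) (C₂ : ℝ) (M₁ M₂ a₁ b₁ a₂ b₂ : ℝ)
    (hM₁ : 0 < M₁) (hM₂ : 0 < M₂)
    (hφ₁ : InV1 φ₁ M₁) (hφ₂ : InV1 φ₂ M₂)
    (hC₂ : ∀ x : ℝ, |deriv φ₂ x| ≤ C₂)
    (ha₁ : 0 < a₁) (hab₁ : a₁ < b₁) (ha₂ : 0 < a₂) (hab₂ : a₂ < b₂)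
    (hη₁ : InD η₁ a₁ b₁) (hη₂ : InD η₂ a₂ b₂) :
    Real.sqrt (∫ x : ℝ, (φ₁ (η₁ x) - φ₂ (η₂ x)) ^ 2) ≤
      (1 / Real.sqrt a₁) * Real.sqrt (∫ y : ℝ, (φ₁ y - φ₂ y) ^ 2) +
      C₂ * Real.sqrt (∫ x : ℝ, (η₁ x - η₂ x) ^ 2) :=
  composition_L2_diff_bound_general φ₁ φ₂ η₁ η₂ C₂ M₁ M₂ a₁ b₁ a₂ b₂ hφ₁ hφ₂ hC₂ ha₁ hη₁ hη₂
end
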